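/- If L ∈ ℝ^{m×m} is symmetric positive definite and C ∈ ℝ^{n×n} has positive semidefinite symmetric part (C + Cᵀ ⪰ 0), then the matrix 𝒦 = Iₙ ⊗ L + C ⊗ I_m is invertible. -/

import Mathlib

open Matrix Kronecker

namespace Matrix

variable {ι K : Type*} [Fintype ι] [Field K]

theorem isUnit_of_dotProduct_mulVec_pos [Preorder K] [DecidableEq ι] {A : Matrix ι ι K}
    (hA : ∀ x ≠ 0, 0 < x ⬝ᵥ A *ᵥ x) : IsUnit A := by
  rw [isUnit_iff_isUnit_det, isUnit_iff_ne_zero]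
  intro hdet
  obtain ⟨x, hx, hAx⟩ := exists_mulVec_eq_zero_iff.2 hdet
  simpa [hAx] using hA x hx

theorem dotProduct_mulVec_nonneg_of_posSemidef_add_transpose [LinearOrder K]
    [IsStrictOrderedRing K] [StarRing K] [TrivialStar K]
    {A : Matrix ι ι K} (hA : (A + Aᵀ).PosSemidef) (x : ι → K) : 0 ≤ x ⬝ᵥ A *ᵥ x := by
  have h := hA.dotProduct_mulVec_nonneg x
  rw [star_trivial, add_mulVec, dotProduct_add, dotProduct_transpose_mulVec] at h
  linarith

end Matrix

theorem stmt_18_general {m n : ℕ} (L : Matrix (Fin m) (Fin m) ℝ) (C : Matrix (Fin n) (Fin n) ℝ)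
    (hL : L.PosDef) (hC : (C + Cᵀ).PosSemidef) :
    IsUnit ((1 : Matrix (Fin n) (Fin n) ℝ) ⊗ₖ L + C ⊗ₖ (1 : Matrix (Fin m) (Fin m) ℝ)) := by
  refine isUnit_of_dotProduct_mulVec_pos fun x hx => ?_
  have hLpart : 0 < x ⬝ᵥ ((1 : Matrix (Fin n) (Fin n) ℝ) ⊗ₖ L) *ᵥ x := by
    simpa using (PosDef.one.kronecker hL).dotProduct_mulVec_pos hx
  have hCpart : 0 ≤ x ⬝ᵥ (C ⊗ₖ (1 : Matrix (Fin m) (Fin m) ℝ)) *ᵥ x := by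
    refine dotProduct_mulVec_nonneg_of_posSemidef_add_transpose ?_ x
    rw [← kroneckerMap_transpose, transpose_one, ← add_kronecker]
    exact hC.kronecker PosSemidef.one
  rw [add_mulVec, dotProduct_add]
  linarith

theorem stmt_18 {m n : ℕ} (L : Matrix (Fin m) (Fin m) ℝ) (C : Matrix (Fin n) (Fin n) ℝ)
    (hL : L.PosDef) (hLsymm : L.IsSymm) (hC : (C + Cᵀ).PosSemidef) :
    IsUnit ((1 : Matrix (Fin n) (Fin n) ℝ) ⊗ₖ L + C ⊗ₖ (1 : Matrix (Fin m) (Fin m) ℝ)) :=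
  stmt_18_general L C hL hC
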